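/- Let k ≥ 2 and let P_k ⊆ E be the vertex set of the regular 2k-gon inscribed in the unit circle, P_k = {p_j = (cos(jπ/k), sin(jπ/k)) : 0 ≤ j < 2k}. Then every configuration of k closed disks covering P_k has maximum radius at least sin(π/(2k)); that is, for all c : Fin k → E and r : Fin k → ℝ with P_k ⊆ ⋃ i, Metric.closedBall (c i) (r i), there exists i with r i ≥ sin(π/(2k)). -/

import Mathlib

open Metric Real

noncomputable section

abbrev E : Type := EuclideanSpace ℝ (Fin 2)

/-- The `j`-th vertex of the regular `2k`-gon inscribed in the unit circle. -/
noncomputable def gonPt (k j : ℕ) : E := !₂[Real.cos (j * π / k), Real.sin (j * π / k)]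

/-- The vertex set of the regular `2k`-gon inscribed in the unit circle. -/
def Pgon (k : ℕ) : Set E := {x | ∃ j < 2 * k, x = gonPt k j}

/-!
Among `2k` vertices covered by `k` disks, two distinct ones lie in the same disk (pigeonhole),
so that disk has diameter at least the distance between them. Any two distinct vertices of the
regular `2k`-gon are at distance `2 |sin (n π / 2k)|` for some `1 ≤ n ≤ 2k - 1`, which is at least
the side length `2 sin (π / 2k)`.
-/

theorem exists_dist_le_two_mul_of_card_lt {X ι κ : Type*} [PseudoMetricSpace X]
    [Fintype ι] [Fintype κ] {c : ι → X} {r : ι → ℝ} {p : κ → X}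
    (hp : ∀ j, p j ∈ ⋃ i, closedBall (c i) (r i)) (hcard : Fintype.card ι < Fintype.card κ) :
    ∃ i, ∃ j j', j ≠ j' ∧ dist (p j) (p j') ≤ 2 * r i := by
  choose f hf using fun j => Set.mem_iUnion.mp (hp j)
  obtain ⟨j, j', hne, heq⟩ := Fintype.exists_ne_map_eq_of_card_lt f hcard
  have hj := mem_closedBall.mp (hf j)
  have hj' := mem_closedBall.mp (hf j')
  rw [heq] at hj
  exact ⟨f j', j, j', hne, by linarith [dist_triangle_right (p j) (p j') (c (f j'))]⟩

theorem dist_cos_sin (x y : ℝ) :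
    dist (!₂[cos x, sin x] : EuclideanSpace ℝ (Fin 2)) !₂[cos y, sin y]
      = 2 * |sin ((x - y) / 2)| := by
  have hsq : (cos x - cos y) ^ 2 + (sin x - sin y) ^ 2 = (2 * |sin ((x - y) / 2)|) ^ 2 := by
    have hcos := cos_two_mul ((x - y) / 2)
    rw [show 2 * ((x - y) / 2) = x - y by ring, cos_sq'] at hcos
    rw [mul_pow, sq_abs]
    nlinarith [cos_sub x y, sin_sq_add_cos_sq x, sin_sq_add_cos_sq y]
  rw [EuclideanSpace.dist_eq, Fin.sum_univ_two]
  simp only [Fin.isValue, Matrix.cons_val_zero, Matrix.cons_val_one, Matrix.cons_val_fin_one,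
    Real.dist_eq, sq_abs]
  rw [hsq, sqrt_sq (by positivity)]

theorem sin_le_sin_of_le_of_le_pi_sub {a x : ℝ} (ha : 0 ≤ a) (hax : a ≤ x) (hxa : x ≤ π - a) :
    sin a ≤ sin x := by
  rcases le_total x (π / 2) with h | h
  · exact sin_le_sin_of_le_of_le_pi_div_two (by linarith [pi_pos]) h hax
  · rw [← sin_pi_sub x]
    exact sin_le_sin_of_le_of_le_pi_div_two (by linarith [pi_pos]) (by linarith) (by linarith)

theorem sin_pi_div_le_abs_sin_mul_pi_div {m t : ℝ} (h1 : 1 ≤ |t|) (h2 : |t| ≤ m - 1) :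
    sin (π / m) ≤ |sin (t * π / m)| := by
  have hm : 0 < m := by linarith
  have key : sin (π / m) ≤ sin (|t| * π / m) := by
    apply sin_le_sin_of_le_of_le_pi_sub (by positivity)
    · gcongr
      exact le_mul_of_one_le_left pi_pos.le h1
    · rw [show π - π / m = (m - 1) * π / m by field_simp]
      gcongr
  rcases abs_cases t with ⟨ht, -⟩ | ⟨ht, -⟩ <;> rw [ht] at key
  · exact key.trans (le_abs_self _)
  · rw [neg_mul, neg_div, sin_neg] at key
    exact key.trans (neg_le_abs _)

theorem two_mul_sin_le_dist_gonPt {k a b : ℕ} (ha : a < 2 * k) (hb : b < 2 * k) (hab : a ≠ b) :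
    2 * sin (π / (2 * k)) ≤ dist (gonPt k a) (gonPt k b) := by
  have hk : (k : ℝ) ≠ 0 := by norm_cast; omega
  have hangle : (a * π / k - b * π / k) / 2 = ((a : ℝ) - b) * π / (2 * k) := by
    field_simp
  rw [gonPt, gonPt, dist_cos_sin, hangle]
  have hdiff : 1 ≤ |(a : ℤ) - b| ∧ |(a : ℤ) - b| ≤ 2 * k - 1 :=
    ⟨Int.one_le_abs (by omega), abs_le.mpr ⟨by omega, by omega⟩⟩
  gcongr
  exact sin_pi_div_le_abs_sin_mul_pi_div (by exact_mod_cast hdiff.1) (by exact_mod_cast hdiff.2)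

theorem gon_cover_needs_radius_sin
    (k : ℕ) (hk : 2 ≤ k) (c : Fin k → E) (r : Fin k → ℝ)
    (hcov : Pgon k ⊆ ⋃ i, Metric.closedBall (c i) (r i)) :
    ∃ i, Real.sin (π / (2 * k)) ≤ r i := by
  obtain ⟨i, j, j', hne, hdist⟩ := exists_dist_le_two_mul_of_card_lt (c := c) (r := r)
    (p := fun j : Fin (2 * k) => gonPt k j) (fun j => hcov ⟨j, j.2, rfl⟩)
    (by simp only [Fintype.card_fin]; omega)
  exact ⟨i, by linarith [two_mul_sin_le_dist_gonPt j.2 j'.2 (Fin.val_ne_of_ne hne)]⟩
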